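/- arXiv:1211.1628 — 7 statements merged into one kernel-verified Lean document; each statement's English description precedes it below -/
import Mathlib

section
/- Let n ≥ 1. An n²×n² matrix P with entries in {1,…,n²}, partitioned into n² blocks P_{ij} (1 ≤ i,j ≤ n) of size n×n, is a Sudoku matrix if and only if there exist n² pairwise disjoint S-permutation matrices A_1, A_2, …, A_{n²} of order n² such that P = 1·A_1 + 2·A_2 + ⋯ + n²·A_{n²}. -/
/-- An `n²×n²` binary matrix, with rows indexed by `(block-row, offset)` and columns by
`(block-column, offset)`, is an S-permutation matrix if it is a permutation matrix
(exactly one `1` in every row and every column) and every `n×n` block contains exactly one `1`. -/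
def IsSPermMatrix (n : ℕ) (A : Matrix (Fin n × Fin n) (Fin n × Fin n) Bool) : Prop :=
  (∀ r, ∃! c, A r c = true) ∧
  (∀ c, ∃! r, A r c = true) ∧
  (∀ i j : Fin n, ∃! p : Fin n × Fin n, A (i, p.1) (j, p.2) = true)

/-- Two binary matrices are disjoint if there is no position where both have a `1`. -/
def MatDisjoint {α β : Type*} (A B : Matrix α β Bool) : Prop :=
  ∀ i j, ¬(A i j = true ∧ B i j = true)

/-- An `n²×n²` matrix with natural number entries is a Sudoku matrix if every row, every
column and every `n×n` block contains each of the numbers `1,…,n²` exactly once. -/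
def IsSudoku (n : ℕ) (P : Matrix (Fin n × Fin n) (Fin n × Fin n) ℕ) : Prop :=
  (∀ r, ∀ v ∈ Finset.Icc 1 (n * n), ∃! c, P r c = v) ∧
  (∀ c, ∀ v ∈ Finset.Icc 1 (n * n), ∃! r, P r c = v) ∧
  (∀ i j : Fin n, ∀ v ∈ Finset.Icc 1 (n * n), ∃! p : Fin n × Fin n, P (i, p.1) (j, p.2) = v)

/-- `π ∈ Π_n` iff in each row the first components form a permutation of `{1,…,n}` and in
each column the second components form a permutation of `{1,…,n}`. -/
def IsPiMatrix (n : ℕ) (π : Matrix (Fin n) (Fin n) (Fin n × Fin n)) : Prop :=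
  (∀ i, Function.Bijective fun j => (π i j).1) ∧
  (∀ j, Function.Bijective fun i => (π i j).2)

/-- Two elements of `Π_n` are disjoint if they differ in every entry. -/
def PiDisjoint {n : ℕ} (π π' : Matrix (Fin n) (Fin n) (Fin n × Fin n)) : Prop :=
  ∀ i j, π i j ≠ π' i j

/-- number of elements of `S` in row `i` -/
def rowCount {n : ℕ} (S : Finset (Fin n × Fin n)) (i : Fin n) : ℕ :=
  (S.filter fun p => p.1 = i).card

/-- number of elements of `S` in column `j` -/
def colCount {n : ℕ} (S : Finset (Fin n × Fin n)) (j : Fin n) : ℕ :=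
  (S.filter fun p => p.2 = j).card

lemma key_sum {n : ℕ} (A : Fin (n*n) → Matrix (Fin n × Fin n) (Fin n × Fin n) Bool)
    (hd : ∀ k l, k ≠ l → MatDisjoint (A k) (A l)) (r c : Fin n × Fin n) (j : Fin (n*n))
    (hj : A j r c = true) :
    ∑ k : Fin (n * n), (k.val + 1) * (if A k r c = true then 1 else 0) = j.val + 1 := by
  rw [Finset.sum_eq_single j]
  · simp [hj]
  · intro b _ hb
    have hab : A b r c = false := by
      cases h : A b r c
      · rfl
      · exact absurd ⟨h, hj⟩ (hd b j hb r c)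
    simp [hab]
  · intro h; exact absurd (Finset.mem_univ j) h

theorem sudoku_iff_sum_of_disjoint_sperm (n : ℕ) (hn : 1 ≤ n)
    (P : Matrix (Fin n × Fin n) (Fin n × Fin n) ℕ) :
    IsSudoku n P ↔
      ∃ A : Fin (n * n) → Matrix (Fin n × Fin n) (Fin n × Fin n) Bool,
        (∀ k, IsSPermMatrix n (A k)) ∧
        (∀ k l, k ≠ l → MatDisjoint (A k) (A l)) ∧
        (∀ r c, P r c = ∑ k : Fin (n * n), (k.val + 1) * (if A k r c = true then 1 else 0)) := by
  constructor
  · rintro ⟨hrow, hcol, hblk⟩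
    classical
    set A : Fin (n * n) → Matrix (Fin n × Fin n) (Fin n × Fin n) Bool :=
      fun k r c => decide (P r c = k.val + 1) with hA
    have hAiff : ∀ k r c, A k r c = true ↔ P r c = k.val + 1 := by
      intro k r c; simp [hA]
    have hd : ∀ k l, k ≠ l → MatDisjoint (A k) (A l) := by
      intro k l hkl r c ⟨h1, h2⟩
      rw [hAiff] at h1 h2
      exact hkl (Fin.ext (by omega))
    have hmem : ∀ r c, P r c ∈ Finset.Icc 1 (n*n) := by
      intro r c
      set T : Finset (Fin n × Fin n) :=
        Finset.univ.filter (fun c' => P r c' ∈ Finset.Icc 1 (n*n)) with hT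
      have hsurj : Set.SurjOn (fun c' => P r c') ↑T ↑(Finset.Icc 1 (n*n)) := by
        intro v hv
        simp only [Finset.coe_Icc, Set.mem_Icc] at hv
        obtain ⟨c', hc', -⟩ := hrow r v (Finset.mem_Icc.mpr hv)
        refine ⟨c', ?_, hc'⟩
        simp only [hT, Finset.coe_filter, Finset.mem_univ, true_and, Set.mem_setOf_eq]
        rw [hc']
        exact Finset.mem_Icc.mpr hv
      have hcard := Finset.card_le_card_of_surjOn _ hsurj
      have hTuniv : T = Finset.univ := by
        apply Finset.eq_univ_of_card
        have h1 : T.card ≤ n * n := by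
          simpa [Fintype.card_prod] using Finset.card_le_univ T
        have h2 : n * n ≤ T.card := by
          simpa [Nat.card_Icc] using hcard
        simp [Fintype.card_prod]; omega
      have : c ∈ T := hTuniv ▸ Finset.mem_univ c
      simpa [hT] using this
    refine ⟨A, ?_, hd, ?_⟩
    · intro k
      have hk : k.val + 1 ∈ Finset.Icc 1 (n*n) := by
        have := k.isLt
        exact Finset.mem_Icc.mpr ⟨by omega, by omega⟩
      refine ⟨?_, ?_, ?_⟩
      · intro r; simpa [hAiff] using hrow r _ hk
      · intro c; simpa [hAiff] using hcol c _ hk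
      · intro i j; simpa [hAiff] using hblk i j _ hk
    · intro r c
      obtain ⟨h1, h2⟩ := Finset.mem_Icc.mp (hmem r c)
      have hk : P r c - 1 < n * n := by omega
      have hval : ((⟨P r c - 1, hk⟩ : Fin (n*n)) : ℕ) = P r c - 1 := rfl
      have := key_sum A hd r c ⟨P r c - 1, hk⟩ ((hAiff _ r c).mpr (by rw [hval]; omega))
      rw [this, hval]; omega
  · rintro ⟨A, hS, hd, hsum⟩
    have hex : ∀ (r c : Fin n × Fin n) v (hv : v ∈ Finset.Icc 1 (n*n)),
        P r c = v → A ⟨v - 1, by have := (Finset.mem_Icc.mp hv); omega⟩ r c = true := by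
      intro r c v hv h
      obtain ⟨hv1, hv2⟩ := Finset.mem_Icc.mp hv
      obtain ⟨j, hj⟩ : ∃ j, A j r c = true := by
        by_contra hno
        push_neg at hno
        have hz : P r c = 0 := by
          rw [hsum]
          apply Finset.sum_eq_zero
          intro j _
          simp [hno j]
        omega
      have hs := key_sum A hd r c j hj
      rw [hsum r c] at h
      have hjv : j = ⟨v - 1, by omega⟩ := Fin.ext (by simp; omega)
      exact hjv ▸ hj
    refine ⟨?_, ?_, ?_⟩
    · intro r v hv
      obtain ⟨hv1, hv2⟩ := Finset.mem_Icc.mp hv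
      obtain ⟨c₀, hc₀, huniq⟩ := (hS ⟨v - 1, by omega⟩).1 r
      refine ⟨c₀, ?_, fun c hc => huniq c (hex r c v hv hc)⟩
      show P r c₀ = v
      rw [hsum r c₀, key_sum A hd r c₀ _ hc₀]
      simp; omega
    · intro c v hv
      obtain ⟨hv1, hv2⟩ := Finset.mem_Icc.mp hv
      obtain ⟨r₀, hr₀, huniq⟩ := (hS ⟨v - 1, by omega⟩).2.1 c
      refine ⟨r₀, ?_, fun r hr => huniq r (hex r c v hv hr)⟩
      show P r₀ c = v
      rw [hsum r₀ c, key_sum A hd r₀ c _ hr₀]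
      simp; omega
    · intro i j v hv
      obtain ⟨hv1, hv2⟩ := Finset.mem_Icc.mp hv
      obtain ⟨p₀, hp₀, huniq⟩ := (hS ⟨v - 1, by omega⟩).2.2 i j
      refine ⟨p₀, ?_, fun p hp => huniq p (hex (i, p.1) (j, p.2) v hv hp)⟩
      show P (i, p₀.1) (j, p₀.2) = v
      rw [hsum _ _, key_sum A hd _ _ _ hp₀]
      simp; omega
end

section
/- Let n ≥ 1. The number of S-permutation matrices of order n² is (n!)^{2n}. -/
def toMat (n : ℕ) (σ τ : Fin n → Equiv.Perm (Fin n)) :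
    Matrix (Fin n × Fin n) (Fin n × Fin n) Bool :=
  fun p q => decide (σ p.1 q.1 = p.2 ∧ τ q.1 p.1 = q.2)

lemma toMat_sperm (n : ℕ) (σ τ : Fin n → Equiv.Perm (Fin n)) :
    IsSPermMatrix n (toMat n σ τ) := by
  refine ⟨?_, ?_, ?_⟩
  · rintro ⟨i, r⟩
    refine ⟨((σ i).symm r, τ ((σ i).symm r) i), by simp [toMat], ?_⟩
    rintro ⟨j, c⟩ h
    simp only [toMat, decide_eq_true_eq] at h
    obtain ⟨h1, h2⟩ := h
    have hj : j = (σ i).symm r := by rw [← h1]; simp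
    subst hj; subst h2; rfl
  · rintro ⟨j, c⟩
    refine ⟨((τ j).symm c, σ ((τ j).symm c) j), by simp [toMat], ?_⟩
    rintro ⟨i, r⟩ h
    simp only [toMat, decide_eq_true_eq] at h
    obtain ⟨h1, h2⟩ := h
    have hi : i = (τ j).symm c := by rw [← h2]; simp
    subst hi; subst h1; rfl
  · intro i j
    refine ⟨(σ i j, τ j i), by simp [toMat], ?_⟩
    rintro ⟨r, c⟩ h
    simp only [toMat, decide_eq_true_eq] at h
    obtain ⟨h1, h2⟩ := h
    subst h1; subst h2; rfl

lemma toMat_bij (n : ℕ) :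
    Function.Bijective (fun στ : (Fin n → Equiv.Perm (Fin n)) × (Fin n → Equiv.Perm (Fin n)) =>
      (⟨toMat n στ.1 στ.2, toMat_sperm n στ.1 στ.2⟩ :
        {A : Matrix (Fin n × Fin n) (Fin n × Fin n) Bool // IsSPermMatrix n A})) := by
  constructor
  · rintro ⟨σ, τ⟩ ⟨σ', τ'⟩ h
    simp only [Subtype.mk.injEq] at h
    have key : ∀ i j : Fin n, σ i j = σ' i j ∧ τ j i = τ' j i := by
      intro i j
      have h1 : toMat n σ τ (i, σ i j) (j, τ j i) = true := by simp [toMat]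
      rw [h] at h1
      simp only [toMat, decide_eq_true_eq] at h1
      exact ⟨h1.1.symm, h1.2.symm⟩
    have hσ : σ = σ' := funext fun i => Equiv.ext fun j => (key i j).1
    have hτ : τ = τ' := funext fun j => Equiv.ext fun i => (key i j).2
    simp only [Prod.mk.injEq]; exact ⟨hσ, hτ⟩
  · rintro ⟨A, hA⟩
    set f : Fin n → Fin n → Fin n × Fin n := fun i j => (hA.2.2 i j).exists.choose with hf
    have hfspec : ∀ i j, A (i, (f i j).1) (j, (f i j).2) = true :=
      fun i j => (hA.2.2 i j).exists.choose_spec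
    have hfuniq : ∀ i j (p : Fin n × Fin n), A (i, p.1) (j, p.2) = true → p = f i j := by
      intro i j p hp
      exact (hA.2.2 i j).unique hp (hfspec i j)
    have g1 : ∀ i, Function.Bijective (fun j => (f i j).1) := by
      intro i
      rw [Finite.injective_iff_bijective.symm]
      intro j j' hjj
      have hjj' : (f i j).1 = (f i j').1 := hjj
      have h1 := hfspec i j
      have h2 := hfspec i j'
      rw [← hjj'] at h2
      have := ((hA.1 (i, (f i j).1)).unique h1 h2)
      exact (Prod.mk.injEq _ _ _ _ ▸ this).1
    have g2 : ∀ j, Function.Bijective (fun i => (f i j).2) := by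
      intro j
      rw [Finite.injective_iff_bijective.symm]
      intro i i' hii
      have hii' : (f i j).2 = (f i' j).2 := hii
      have h1 := hfspec i j
      have h2 := hfspec i' j
      rw [← hii'] at h2
      have := ((hA.2.1 (j, (f i j).2)).unique h1 h2)
      exact (Prod.mk.injEq _ _ _ _ ▸ this).1
    refine ⟨⟨fun i => Equiv.ofBijective _ (g1 i), fun j => Equiv.ofBijective _ (g2 j)⟩, ?_⟩
    ext ⟨i, r⟩ ⟨j, c⟩
    show toMat n _ _ (i, r) (j, c) = A (i, r) (j, c)
    have key : A (i, r) (j, c) = true ↔ (f i j).1 = r ∧ (f i j).2 = c := by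
      constructor
      · intro h
        have := hfuniq i j (r, c) h
        exact ⟨congrArg Prod.fst this.symm, congrArg Prod.snd this.symm⟩
      · rintro ⟨h1, h2⟩
        rw [← h1, ← h2]; exact hfspec i j
    rw [Bool.eq_iff_iff]
    simp only [toMat, Equiv.ofBijective_apply, decide_eq_true_eq]
    exact key.symm

theorem card_sperm_matrices (n : ℕ) (hn : 1 ≤ n) :
    Nat.card {A : Matrix (Fin n × Fin n) (Fin n × Fin n) Bool // IsSPermMatrix n A} =
      (n.factorial) ^ (2 * n) := by
  rw [← Nat.card_congr (Equiv.ofBijective _ (toMat_bij n))]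
  simp [Nat.card_eq_fintype_card, Fintype.card_perm, two_mul, pow_add, Fintype.card_fun]
end

section
/- Let n ≥ 1. The map Φ that sends an S-permutation matrix A of order n² to the n×n matrix of ordered pairs whose (i,j) entry is ⟨a, b⟩, where (a,b) is the position of the unique 1 inside block A_{ij}, is a bijection from the set of S-permutation matrices of order n² onto Π_n. -/
noncomputable def phiFun {n : ℕ} (A : Matrix (Fin n × Fin n) (Fin n × Fin n) Bool)
    (h : IsSPermMatrix n A) : Matrix (Fin n) (Fin n) (Fin n × Fin n) :=
  fun i j => (h.2.2 i j).choose

lemma phiFun_spec {n : ℕ} (A : Matrix (Fin n × Fin n) (Fin n × Fin n) Bool)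
    (h : IsSPermMatrix n A) (i j : Fin n) :
    A (i, (phiFun A h i j).1) (j, (phiFun A h i j).2) = true :=
  (h.2.2 i j).choose_spec.1

lemma phiFun_eq_iff {n : ℕ} (A : Matrix (Fin n × Fin n) (Fin n × Fin n) Bool)
    (h : IsSPermMatrix n A) (i j : Fin n) (p : Fin n × Fin n) :
    A (i, p.1) (j, p.2) = true ↔ phiFun A h i j = p := by
  constructor
  · intro hp
    exact ((h.2.2 i j).choose_spec.2 p hp).symm
  · rintro rfl
    exact phiFun_spec A h i j

lemma phiFun_pi {n : ℕ} (A : Matrix (Fin n × Fin n) (Fin n × Fin n) Bool)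
    (h : IsSPermMatrix n A) : IsPiMatrix n (phiFun A h) := by
  constructor
  · intro i
    rw [Fintype.bijective_iff_injective_and_card]
    refine ⟨fun j j' hjj' => ?_, rfl⟩
    have h1 := phiFun_spec A h i j
    have h2 := phiFun_spec A h i j'
    simp only at hjj'
    rw [← hjj'] at h2
    have heq := (h.1 (i, (phiFun A h i j).1)).unique h1 h2
    exact congrArg Prod.fst heq
  · intro j
    rw [Fintype.bijective_iff_injective_and_card]
    refine ⟨fun i i' hii' => ?_, rfl⟩
    have h1 := phiFun_spec A h i j
    have h2 := phiFun_spec A h i' j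
    simp only at hii'
    rw [← hii'] at h2
    have heq := (h.2.1 (j, (phiFun A h i j).2)).unique h1 h2
    exact congrArg Prod.fst heq

def invMat {n : ℕ} (π : Matrix (Fin n) (Fin n) (Fin n × Fin n)) :
    Matrix (Fin n × Fin n) (Fin n × Fin n) Bool :=
  fun r c => decide (π r.1 c.1 = (r.2, c.2))

lemma invMat_sperm {n : ℕ} (π : Matrix (Fin n) (Fin n) (Fin n × Fin n))
    (hπ : IsPiMatrix n π) : IsSPermMatrix n (invMat π) := by
  refine ⟨?_, ?_, ?_⟩
  · rintro ⟨i, a⟩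
    obtain ⟨j, hj⟩ := (hπ.1 i).2 a
    refine ⟨(j, (π i j).2), ?_, ?_⟩
    · simp [invMat, ← hj]
    · rintro ⟨j', b'⟩ hb'
      simp only [invMat, decide_eq_true_eq] at hb'
      have hj' : (π i j').1 = a := by rw [hb']
      have : j' = j := (hπ.1 i).1 (hj'.trans hj.symm)
      subst this
      simp [hb']
  · rintro ⟨j, b⟩
    obtain ⟨i, hi⟩ := (hπ.2 j).2 b
    refine ⟨(i, (π i j).1), ?_, ?_⟩
    · simp [invMat, ← hi]
    · rintro ⟨i', a'⟩ ha'
      simp only [invMat, decide_eq_true_eq] at ha'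
      have hi' : (π i' j).2 = b := by rw [ha']
      have : i' = i := (hπ.2 j).1 (hi'.trans hi.symm)
      subst this
      simp [ha']
  · intro i j
    refine ⟨π i j, by simp [invMat], ?_⟩
    rintro ⟨a, b⟩ hab
    simp only [invMat, decide_eq_true_eq] at hab
    exact hab.symm


theorem phi_bijective (n : ℕ) (hn : 1 ≤ n) :
    ∃ Φ : {A : Matrix (Fin n × Fin n) (Fin n × Fin n) Bool // IsSPermMatrix n A} →
          {π : Matrix (Fin n) (Fin n) (Fin n × Fin n) // IsPiMatrix n π},
      (∀ (A : {A : Matrix (Fin n × Fin n) (Fin n × Fin n) Bool // IsSPermMatrix n A}) (i j : Fin n), A.val (i, ((Φ A).val i j).1) (j, ((Φ A).val i j).2) = true) ∧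
      Function.Bijective Φ := by
  classical
  refine ⟨fun A => ⟨phiFun A.1 A.2, phiFun_pi A.1 A.2⟩, fun A i j => phiFun_spec A.1 A.2 i j, ?_, ?_⟩
  · rintro ⟨A, hA⟩ ⟨B, hB⟩ hAB
    simp only [Subtype.mk.injEq] at hAB ⊢
    funext r c
    have key : (A r c = true) ↔ (B r c = true) := by
      rw [show r = (r.1, r.2) from rfl, show c = (c.1, c.2) from rfl,
        phiFun_eq_iff A hA r.1 c.1 (r.2, c.2), phiFun_eq_iff B hB r.1 c.1 (r.2, c.2), hAB]
    cases hAc : A r c <;> cases hBc : B r c <;> simp_all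
  · rintro ⟨π, hπ⟩
    refine ⟨⟨invMat π, invMat_sperm π hπ⟩, ?_⟩
    simp only [Subtype.mk.injEq]
    funext i j
    have := phiFun_spec (invMat π) (invMat_sperm π hπ) i j
    simp only [invMat, decide_eq_true_eq] at this
    exact this.symm
end

section
/- Let n ≥ 1, and let Φ be the bijection that sends an S-permutation matrix A of order n² to the matrix in Π_n whose (i,j) entry is the position ⟨a,b⟩ of the unique 1 inside block A_{ij}. Then two S-permutation matrices A and B are disjoint if and only if Φ(A) and Φ(B) are disjoint elements of Π_n (i.e., they differ in every entry). -/
theorem phi_preserves_disjointness (n : ℕ) (hn : 1 ≤ n)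
    (Φ : {A : Matrix (Fin n × Fin n) (Fin n × Fin n) Bool // IsSPermMatrix n A} →
         {π : Matrix (Fin n) (Fin n) (Fin n × Fin n) // IsPiMatrix n π})
    (hΦ : ∀ (A : {A : Matrix (Fin n × Fin n) (Fin n × Fin n) Bool // IsSPermMatrix n A}) (i j : Fin n), A.val (i, ((Φ A).val i j).1) (j, ((Φ A).val i j).2) = true)
    (hbij : Function.Bijective Φ)
    (A B : {A : Matrix (Fin n × Fin n) (Fin n × Fin n) Bool // IsSPermMatrix n A}) :
    MatDisjoint A.val B.val ↔ PiDisjoint (Φ A).val (Φ B).val := by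
  constructor
  · intro hd i j heq
    exact hd (i, ((Φ A).val i j).1) (j, ((Φ A).val i j).2)
      ⟨hΦ A i j, by rw [heq]; exact hΦ B i j⟩
  · rintro hd ⟨i, a⟩ ⟨j, b⟩ ⟨hA, hB⟩
    obtain ⟨p, -, hup⟩ := A.prop.2.2 i j
    obtain ⟨q, -, huq⟩ := B.prop.2.2 i j
    have h1 : ((Φ A).val i j) = p := hup _ (hΦ A i j)
    have h2 : (a, b) = p := hup (a, b) hA
    have h3 : ((Φ B).val i j) = q := huq _ (hΦ B i j)
    have h4 : (a, b) = q := huq (a, b) hB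
    exact hd i j (by rw [h1, h3, ← h2, ← h4])
end

section
/- Let n ≥ 1. The number of ordered pairs (A,B) of disjoint S-permutation matrices of order n² equals the number of ordered pairs (π', π'') of disjoint elements of Π_n. -/
noncomputable def piOf {n : ℕ} (A : Matrix (Fin n × Fin n) (Fin n × Fin n) Bool)
    (h : IsSPermMatrix n A) : Matrix (Fin n) (Fin n) (Fin n × Fin n) :=
  fun i j => (h.2.2 i j).choose

lemma piOf_eq_iff {n : ℕ} {A : Matrix (Fin n × Fin n) (Fin n × Fin n) Bool}
    (h : IsSPermMatrix n A) (i j : Fin n) (p : Fin n × Fin n) :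
    piOf A h i j = p ↔ A (i, p.1) (j, p.2) = true := by
  constructor
  · rintro rfl; exact (h.2.2 i j).choose_spec.1
  · intro hp; exact ((h.2.2 i j).choose_spec.2 p hp).symm

lemma piOf_isPi {n : ℕ} {A : Matrix (Fin n × Fin n) (Fin n × Fin n) Bool}
    (h : IsSPermMatrix n A) : IsPiMatrix n (piOf A h) := by
  constructor
  · intro i
    rw [Finite.injective_iff_bijective.symm]
    intro j1 j2 he
    have h1 := (piOf_eq_iff h i j1 _).1 rfl
    have h2 := (piOf_eq_iff h i j2 _).1 rfl
    simp only at he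
    rw [← he] at h2
    have := (h.1 (i, (piOf A h i j1).1)).unique h1 h2
    exact (Prod.ext_iff.1 this).1
  · intro j
    rw [Finite.injective_iff_bijective.symm]
    intro i1 i2 he
    have h1 := (piOf_eq_iff h i1 j _).1 rfl
    have h2 := (piOf_eq_iff h i2 j _).1 rfl
    simp only at he
    rw [← he] at h2
    have := (h.2.1 (j, (piOf A h i1 j).2)).unique h1 h2
    exact (Prod.ext_iff.1 this).1

def matOf {n : ℕ} (π : Matrix (Fin n) (Fin n) (Fin n × Fin n)) :
    Matrix (Fin n × Fin n) (Fin n × Fin n) Bool :=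
  fun r c => decide (π r.1 c.1 = (r.2, c.2))

lemma matOf_isSPerm {n : ℕ} {π : Matrix (Fin n) (Fin n) (Fin n × Fin n)}
    (h : IsPiMatrix n π) : IsSPermMatrix n (matOf π) := by
  refine ⟨?_, ?_, ?_⟩
  · rintro ⟨i, a⟩
    obtain ⟨j, hj⟩ := (h.1 i).2 a
    refine ⟨(j, (π i j).2), ?_, ?_⟩
    · simp only [matOf, decide_eq_true_eq]
      exact Prod.ext hj rfl
    · rintro ⟨j', b'⟩ hb
      simp only [matOf, decide_eq_true_eq] at hb
      have hj' : (π i j').1 = a := by rw [hb]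
      have : j' = j := (h.1 i).1 (hj'.trans hj.symm)
      subst this
      simp [hb]
  · rintro ⟨j, b⟩
    obtain ⟨i, hi⟩ := (h.2 j).2 b
    refine ⟨(i, (π i j).1), ?_, ?_⟩
    · simp only [matOf, decide_eq_true_eq]
      exact Prod.ext rfl hi
    · rintro ⟨i', a'⟩ ha
      simp only [matOf, decide_eq_true_eq] at ha
      have hi' : (π i' j).2 = b := by rw [ha]
      have : i' = i := (h.2 j).1 (hi'.trans hi.symm)
      subst this
      simp [ha]
  · intro i j
    refine ⟨π i j, by simp [matOf], ?_⟩
    rintro ⟨a, b⟩ hab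
    simp only [matOf, decide_eq_true_eq] at hab
    exact hab.symm

noncomputable def spermEquivPi (n : ℕ) :
    {A : Matrix (Fin n × Fin n) (Fin n × Fin n) Bool // IsSPermMatrix n A} ≃
    {π : Matrix (Fin n) (Fin n) (Fin n × Fin n) // IsPiMatrix n π} where
  toFun A := ⟨piOf A.1 A.2, piOf_isPi A.2⟩
  invFun π := ⟨matOf π.1, matOf_isSPerm π.2⟩
  left_inv := by
    rintro ⟨A, h⟩
    ext ⟨i, a⟩ ⟨j, b⟩
    simp only [matOf]
    rcases hA : A (i, a) (j, b)
    · simp only [decide_eq_false_iff_not]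
      intro hc
      rw [piOf_eq_iff h i j (a, b)] at hc
      simp [hc] at hA
    · simp only [decide_eq_true_eq]
      exact (piOf_eq_iff h i j (a, b)).2 hA
  right_inv := by
    rintro ⟨π, h⟩
    apply Subtype.ext
    funext i j
    exact (piOf_eq_iff (matOf_isSPerm h) i j (π i j)).2 (by simp [matOf])

lemma matPi_disjoint_iff {n : ℕ} (A B : {A : Matrix (Fin n × Fin n) (Fin n × Fin n) Bool // IsSPermMatrix n A}) :
    MatDisjoint A.1 B.1 ↔ PiDisjoint (spermEquivPi n A).1 (spermEquivPi n B).1 := by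
  constructor
  · intro hd i j he
    have h1 := (piOf_eq_iff A.2 i j _).1 rfl
    have h2 := (piOf_eq_iff B.2 i j _).1 rfl
    have he' : piOf A.1 A.2 i j = piOf B.1 B.2 i j := he
    rw [he'] at h1
    exact hd _ _ ⟨h1, h2⟩
  · rintro hd ⟨i, a⟩ ⟨j, b⟩ ⟨hA, hB⟩
    have h1 := (piOf_eq_iff A.2 i j (a, b)).2 hA
    have h2 := (piOf_eq_iff B.2 i j (a, b)).2 hB
    exact hd i j (show piOf A.1 A.2 i j = piOf B.1 B.2 i j by rw [h1, h2])

theorem card_disjoint_pairs_eq (n : ℕ) (hn : 1 ≤ n) :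
    Nat.card {p : {A : Matrix (Fin n × Fin n) (Fin n × Fin n) Bool // IsSPermMatrix n A} ×
                  {A : Matrix (Fin n × Fin n) (Fin n × Fin n) Bool // IsSPermMatrix n A} //
                MatDisjoint p.1.val p.2.val} =
    Nat.card {p : {π : Matrix (Fin n) (Fin n) (Fin n × Fin n) // IsPiMatrix n π} ×
                  {π : Matrix (Fin n) (Fin n) (Fin n × Fin n) // IsPiMatrix n π} //
                PiDisjoint p.1.val p.2.val} := by
  refine Nat.card_congr (Equiv.subtypeEquiv ((spermEquivPi n).prodCongr (spermEquivPi n)) ?_)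
  rintro ⟨A, B⟩
  exact matPi_disjoint_iff A B
end

section
/- Let n ≥ 1 and 0 ≤ k ≤ n². The number of triples (S, π', π''), where S ⊆ {1,…,n}×{1,…,n} with |S| = k, π', π'' ∈ Π_n, and π'_{ij} = π''_{ij} for every (i,j) ∈ S, equals (n!)^{2n} · Σ_{S ⊆ {1,…,n}×{1,…,n}, |S| = k} ∏_{i=1}^{n} (n − r_i(S))! · ∏_{j=1}^{n} (n − c_j(S))!. -/
section Aux

lemma fixers_aux (n : ℕ) (T : Finset (Fin n)) :
    Nat.card {ρ : Equiv.Perm (Fin n) // ∀ j ∈ T, ρ j = j} = (n - T.card).factorial := by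
  have e1 : Equiv.Perm {x : Fin n // x ∉ T} ≃ {ρ : Equiv.Perm (Fin n) // ∀ j ∈ T, ρ j = j} :=
    (Equiv.Perm.subtypeEquivSubtypePerm (fun a => a ∉ T)).trans
      (Equiv.subtypeEquivRight (fun ρ => by simp))
  rw [← Nat.card_congr e1, Nat.card_eq_fintype_card, Fintype.card_perm]
  congr 1
  rw [Fintype.card_subtype_compl, Fintype.card_fin, Fintype.card_coe]

lemma pairs_aux (n : ℕ) (T : Finset (Fin n)) :
    Nat.card {st : Equiv.Perm (Fin n) × Equiv.Perm (Fin n) // ∀ j ∈ T, st.1 j = st.2 j} =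
      n.factorial * (n - T.card).factorial := by
  have e : {st : Equiv.Perm (Fin n) × Equiv.Perm (Fin n) // ∀ j ∈ T, st.1 j = st.2 j} ≃
      Equiv.Perm (Fin n) × {ρ : Equiv.Perm (Fin n) // ∀ j ∈ T, ρ j = j} :=
    { toFun := fun x => (x.val.1, ⟨x.val.1⁻¹ * x.val.2, fun j hj => by
        simp [Equiv.Perm.mul_apply, ← x.prop j hj]⟩)
      invFun := fun y => ⟨(y.1, y.1 * y.2.val), fun j hj => by
        simp [Equiv.Perm.mul_apply, y.2.prop j hj]⟩
      left_inv := fun x => by ext <;> simp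
      right_inv := fun y => by ext <;> simp }
  rw [Nat.card_congr e, Nat.card_prod, Nat.card_eq_fintype_card, Fintype.card_perm,
    Fintype.card_fin, fixers_aux]

lemma pairfam_aux (n : ℕ) (T : Fin n → Finset (Fin n)) :
    Nat.card {ab : (Fin n → Equiv.Perm (Fin n)) × (Fin n → Equiv.Perm (Fin n)) //
        ∀ i, ∀ j ∈ T i, ab.1 i j = ab.2 i j} =
      ∏ i : Fin n, (n.factorial * (n - (T i).card).factorial) := by
  have e : {ab : (Fin n → Equiv.Perm (Fin n)) × (Fin n → Equiv.Perm (Fin n)) //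
        ∀ i, ∀ j ∈ T i, ab.1 i j = ab.2 i j} ≃
      ∀ i : Fin n, {st : Equiv.Perm (Fin n) × Equiv.Perm (Fin n) //
        ∀ j ∈ T i, st.1 j = st.2 j} := by
    refine (Equiv.subtypeEquiv (Equiv.arrowProdEquivProdArrow _ _ _).symm ?_).trans
      Equiv.subtypePiEquivPi
    intro ab
    simp [Equiv.arrowProdEquivProdArrow]
  rw [Nat.card_congr e, Nat.card_pi]
  exact Finset.prod_congr rfl fun i _ => pairs_aux n (T i)

noncomputable def piEquivAux (n : ℕ) :
    {x : Matrix (Fin n) (Fin n) (Fin n × Fin n) // IsPiMatrix n x} ≃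
    (Fin n → Equiv.Perm (Fin n)) × (Fin n → Equiv.Perm (Fin n)) where
  toFun x := (fun i => Equiv.ofBijective _ (x.prop.1 i), fun j => Equiv.ofBijective _ (x.prop.2 j))
  invFun st := ⟨fun i j => (st.1 i j, st.2 j i),
    fun i => (st.1 i).bijective, fun j => (st.2 j).bijective⟩
  left_inv x := Subtype.ext (by funext i j; rfl)
  right_inv st := by
    refine Prod.ext ?_ ?_ <;> funext i <;> exact Equiv.ext fun j => rfl

lemma rowT_card_aux (n : ℕ) (S : Finset (Fin n × Fin n)) (i : Fin n) :
    ((S.filter fun p => p.1 = i).image Prod.snd).card = rowCount S i := by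
  rw [rowCount, Finset.card_image_of_injOn]
  intro p hp q hq h
  simp only [Finset.coe_filter, Set.mem_setOf_eq] at hp hq
  exact Prod.ext (hp.2.trans hq.2.symm) h

lemma colT_card_aux (n : ℕ) (S : Finset (Fin n × Fin n)) (j : Fin n) :
    ((S.filter fun p => p.2 = j).image Prod.fst).card = colCount S j := by
  rw [colCount, Finset.card_image_of_injOn]
  intro p hp q hq h
  simp only [Finset.coe_filter, Set.mem_setOf_eq] at hp hq
  exact Prod.ext h (hp.2.trans hq.2.symm)

lemma perS_aux (n : ℕ) (S : Finset (Fin n × Fin n)) :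
    Nat.card {pp : {x : Matrix (Fin n) (Fin n) (Fin n × Fin n) // IsPiMatrix n x} ×
        {x : Matrix (Fin n) (Fin n) (Fin n × Fin n) // IsPiMatrix n x} //
        ∀ p ∈ S, pp.1.val p.1 p.2 = pp.2.val p.1 p.2} =
      (∏ i : Fin n, (n.factorial * (n - rowCount S i).factorial)) *
      (∏ j : Fin n, (n.factorial * (n - colCount S j).factorial)) := by
  have e1 := Equiv.subtypeEquiv ((piEquivAux n).prodCongr (piEquivAux n))
    (p := fun pp => ∀ p ∈ S, pp.1.val p.1 p.2 = pp.2.val p.1 p.2)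
    (q := fun q => ∀ p ∈ S,
      (q.1.1 p.1 p.2 = q.2.1 p.1 p.2 ∧ q.1.2 p.2 p.1 = q.2.2 p.2 p.1))
    (fun pp => by
      constructor
      · intro h p hp
        have := h p hp
        exact ⟨congrArg Prod.fst this, congrArg Prod.snd this⟩
      · intro h p hp
        exact Prod.ext (h p hp).1 (h p hp).2)
  have e2 := Equiv.subtypeEquiv (Equiv.prodProdProdComm (Fin n → Equiv.Perm (Fin n))
      (Fin n → Equiv.Perm (Fin n)) (Fin n → Equiv.Perm (Fin n)) (Fin n → Equiv.Perm (Fin n)))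
    (p := fun q : ((Fin n → Equiv.Perm (Fin n)) × (Fin n → Equiv.Perm (Fin n))) ×
        ((Fin n → Equiv.Perm (Fin n)) × (Fin n → Equiv.Perm (Fin n))) => ∀ p ∈ S,
      (q.1.1 p.1 p.2 = q.2.1 p.1 p.2 ∧ q.1.2 p.2 p.1 = q.2.2 p.2 p.1))
    (q := fun r => (∀ p ∈ S, r.1.1 p.1 p.2 = r.1.2 p.1 p.2) ∧
      (∀ p ∈ S, r.2.1 p.2 p.1 = r.2.2 p.2 p.1))
    (fun q => by
      constructor
      · exact fun h => ⟨fun p hp => (h p hp).1, fun p hp => (h p hp).2⟩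
      · exact fun h p hp => ⟨h.1 p hp, h.2 p hp⟩)
  rw [Nat.card_congr ((e1.trans e2).trans (Equiv.subtypeProdEquivProd
    (p := fun ab : (Fin n → Equiv.Perm (Fin n)) × (Fin n → Equiv.Perm (Fin n)) =>
      ∀ p ∈ S, ab.1 p.1 p.2 = ab.2 p.1 p.2)
    (q := fun ab : (Fin n → Equiv.Perm (Fin n)) × (Fin n → Equiv.Perm (Fin n)) =>
      ∀ p ∈ S, ab.1 p.2 p.1 = ab.2 p.2 p.1))), Nat.card_prod]
  congr 1
  · have e3 := Equiv.subtypeEquivRight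
      (p := fun ab : (Fin n → Equiv.Perm (Fin n)) × (Fin n → Equiv.Perm (Fin n)) =>
        ∀ p ∈ S, ab.1 p.1 p.2 = ab.2 p.1 p.2)
      (q := fun ab => ∀ i, ∀ j ∈ (S.filter fun p => p.1 = i).image Prod.snd,
        ab.1 i j = ab.2 i j)
      (fun ab => by
        constructor
        · rintro h i j hj
          simp only [Finset.mem_image, Finset.mem_filter] at hj
          obtain ⟨p, ⟨hpS, hp1⟩, hp2⟩ := hj
          rw [← hp1, ← hp2]; exact h p hpS
        · intro h p hp
          exact h p.1 p.2 (Finset.mem_image.2 ⟨p, Finset.mem_filter.2 ⟨hp, rfl⟩, rfl⟩))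
    rw [Nat.card_congr e3, pairfam_aux]
    exact Finset.prod_congr rfl fun i _ => by rw [rowT_card_aux]
  · have e3 := Equiv.subtypeEquivRight
      (p := fun ab : (Fin n → Equiv.Perm (Fin n)) × (Fin n → Equiv.Perm (Fin n)) =>
        ∀ p ∈ S, ab.1 p.2 p.1 = ab.2 p.2 p.1)
      (q := fun ab => ∀ j, ∀ i ∈ (S.filter fun p => p.2 = j).image Prod.fst,
        ab.1 j i = ab.2 j i)
      (fun ab => by
        constructor
        · rintro h j i hi
          simp only [Finset.mem_image, Finset.mem_filter] at hi
          obtain ⟨p, ⟨hpS, hp2⟩, hp1⟩ := hi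
          rw [← hp1, ← hp2]; exact h p hpS
        · intro h p hp
          exact h p.2 p.1 (Finset.mem_image.2 ⟨p, Finset.mem_filter.2 ⟨hp, rfl⟩, rfl⟩))
    rw [Nat.card_congr e3, pairfam_aux]
    exact Finset.prod_congr rfl fun j _ => by rw [colT_card_aux]

instance (n : ℕ) : DecidablePred (IsPiMatrix n) := fun x => by
  unfold IsPiMatrix; infer_instance

end Aux

theorem card_triples (n k : ℕ) (hn : 1 ≤ n) (hk : k ≤ n * n) :
    Nat.card {t : Finset (Fin n × Fin n) ×
                  {x : Matrix (Fin n) (Fin n) (Fin n × Fin n) // IsPiMatrix n x} ×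
                  {x : Matrix (Fin n) (Fin n) (Fin n × Fin n) // IsPiMatrix n x} //
                t.1.card = k ∧ ∀ p ∈ t.1, t.2.1.val p.1 p.2 = t.2.2.val p.1 p.2} =
      (n.factorial) ^ (2 * n) *
        ∑ S ∈ Finset.univ.filter (fun S : Finset (Fin n × Fin n) => S.card = k),
          (∏ i : Fin n, (n - rowCount S i).factorial) *
          (∏ j : Fin n, (n - colCount S j).factorial) := by
  have e : {t : Finset (Fin n × Fin n) ×
                  {x : Matrix (Fin n) (Fin n) (Fin n × Fin n) // IsPiMatrix n x} ×
                  {x : Matrix (Fin n) (Fin n) (Fin n × Fin n) // IsPiMatrix n x} //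
                t.1.card = k ∧ ∀ p ∈ t.1, t.2.1.val p.1 p.2 = t.2.2.val p.1 p.2} ≃
      Σ S : {S : Finset (Fin n × Fin n) // S.card = k},
        {pp : {x : Matrix (Fin n) (Fin n) (Fin n × Fin n) // IsPiMatrix n x} ×
              {x : Matrix (Fin n) (Fin n) (Fin n × Fin n) // IsPiMatrix n x} //
          ∀ p ∈ S.val, pp.1.val p.1 p.2 = pp.2.val p.1 p.2} :=
    { toFun := fun t => ⟨⟨t.val.1, t.prop.1⟩, ⟨t.val.2, t.prop.2⟩⟩
      invFun := fun x => ⟨(x.1.val, x.2.val), x.1.prop, x.2.prop⟩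
      left_inv := fun t => rfl
      right_inv := fun x => rfl }
  rw [Nat.card_congr e, Nat.card_eq_fintype_card, Fintype.card_sigma]
  have step : ∀ S : {S : Finset (Fin n × Fin n) // S.card = k},
      Fintype.card {pp : {x : Matrix (Fin n) (Fin n) (Fin n × Fin n) // IsPiMatrix n x} ×
              {x : Matrix (Fin n) (Fin n) (Fin n × Fin n) // IsPiMatrix n x} //
          ∀ p ∈ S.val, pp.1.val p.1 p.2 = pp.2.val p.1 p.2} =
        (∏ i : Fin n, (n.factorial * (n - rowCount S.val i).factorial)) *
        (∏ j : Fin n, (n.factorial * (n - colCount S.val j).factorial)) := fun S => by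
    rw [← Nat.card_eq_fintype_card, perS_aux]
  rw [Finset.sum_congr rfl fun S _ => step S]
  rw [← Finset.sum_subtype (Finset.univ.filter fun S : Finset (Fin n × Fin n) => S.card = k)
    (fun S => by simp) (fun S => (∏ i : Fin n, (n.factorial * (n - rowCount S i).factorial)) *
        (∏ j : Fin n, (n.factorial * (n - colCount S j).factorial)))]
  rw [Finset.mul_sum]
  refine Finset.sum_congr rfl fun S _ => ?_
  rw [Finset.prod_mul_distrib, Finset.prod_mul_distrib, Finset.prod_const,
    Finset.card_univ, Fintype.card_fin, two_mul, pow_add]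
  ring
end

section
/- Let n ≥ 1, let σ_n denote the number of n²×n² Sudoku matrices, and let z_n denote the number of unordered families (sets) of n² pairwise disjoint S-permutation matrices of order n². Then z_n = σ_n / (n²)!, i.e., σ_n = (n²)! · z_n. -/
/-!
A Sudoku matrix is the same thing as the ordered tuple of its layers: the `v`-th layer, the 0–1
matrix of the cells holding `v`, is an S-permutation matrix, and distinct layers are disjoint.
Conversely, `n²` pairwise disjoint S-permutation matrices cover every cell, since in each row they
occupy `n²` distinct columns; so every such tuple is the layer tuple of exactly one Sudoku matrix.
Forgetting the order of an injective `n²`-tuple is `(n²)!`-to-one.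
-/

open Finset Function

section Counting

variable {ι α : Type*} [Fintype ι]

noncomputable def embeddingMapUnivEquiv (s : Finset α) :
    {e : ι ↪ α // univ.map e = s} ≃ (ι ≃ s) where
  toFun e := Equiv.ofBijective (fun i => ⟨e.1 i, e.2.subset (mem_map_of_mem _ (mem_univ i))⟩)
    ⟨fun _ _ h => e.1.injective (congrArg Subtype.val h), fun ⟨a, ha⟩ => by
      obtain ⟨i, -, rfl⟩ := mem_map.1 (e.2.symm.subset ha)
      exact ⟨i, rfl⟩⟩
  invFun σ := ⟨σ.toEmbedding.trans (Embedding.subtype _), by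
    ext a
    simp only [mem_map, mem_univ, true_and, Embedding.trans_apply, Equiv.coe_toEmbedding,
      Embedding.subtype_apply]
    exact ⟨by rintro ⟨i, rfl⟩; exact (σ i).2,
      fun ha => ⟨σ.symm ⟨a, ha⟩, by simp⟩⟩⟩
  left_inv _ := rfl
  right_inv _ := Equiv.ext fun _ => rfl

theorem Nat.card_embedding_map_univ_eq_factorial {s : Finset α} (hs : s.card = Fintype.card ι) :
    Nat.card {e : ι ↪ α // univ.map e = s} = (Fintype.card ι).factorial := by
  classical
  rw [Nat.card_congr (embeddingMapUnivEquiv s), Nat.card_eq_fintype_card,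
    Fintype.card_equiv (Fintype.equivOfCardEq (by simpa using hs.symm))]

theorem Nat.card_embedding_fin_eq_factorial_mul [Finite α] (k : ℕ) (P : Finset α → Prop) :
    Nat.card {e : Fin k ↪ α // P (univ.map e)} =
      k.factorial * Nat.card {s : Finset α // s.card = k ∧ P s} := by
  have := Fintype.ofFinite {s : Finset α // s.card = k ∧ P s}
  rw [← Nat.card_congr (Equiv.sigmaSubtypeFiberEquivSubtype (fun e : Fin k ↪ α => univ.map e)
    (q := fun s => s.card = k ∧ P s) fun e => by simp), Nat.card_sigma]
  have hfiber (s : {s : Finset α // s.card = k ∧ P s}) :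
      Nat.card {e : Fin k ↪ α // univ.map e = s} = k.factorial := by
    simpa using Nat.card_embedding_map_univ_eq_factorial (ι := Fin k) (by simpa using s.2.1)
  simp [hfiber, mul_comm]

end Counting

theorem Fintype.existsUnique_of_card_eq {α β : Type*} [Fintype α] [Fintype β]
    (hcard : Fintype.card α = Fintype.card β) {R : α → β → Prop} (hR : ∀ a, ∃! b, R a b)
    (hinj : ∀ a₁ a₂ b, R a₁ b → R a₂ b → a₁ = a₂) (b : β) : ∃! a, R a b := by
  choose g hg using fun a => (hR a).exists
  have hg_inj : Injective g := fun a₁ a₂ h => hinj a₁ a₂ _ (hg a₁) (h ▸ hg a₂)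
  obtain ⟨a, rfl⟩ := ((Fintype.bijective_iff_injective_and_card g).2 ⟨hg_inj, hcard⟩).2 b
  exact ⟨a, hg a, fun a' ha' => hinj a' a _ ha' (hg a)⟩

theorem forall_mem_Icc_one_iff {m : ℕ} {Q : ℕ → Prop} :
    (∀ u ∈ Icc 1 m, Q u) ↔ ∀ v : Fin m, Q (v + 1) := by
  refine ⟨fun h v => h _ (by simp), fun h u hu => ?_⟩
  obtain ⟨hu1, hum⟩ := mem_Icc.1 hu
  simpa [Nat.sub_add_cancel hu1] using h ⟨u - 1, by omega⟩

section Layers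

variable {n : ℕ}

theorem existsUnique_eq_true_of_pairwise_matDisjoint
    {f : Fin (n * n) → Matrix (Fin n × Fin n) (Fin n × Fin n) Bool}
    (hS : ∀ v, IsSPermMatrix n (f v)) (hd : Pairwise (MatDisjoint on f)) (r c : Fin n × Fin n) :
    ∃! v, f v r c = true :=
  Fintype.existsUnique_of_card_eq (by simp) (fun v => (hS v).1 r)
    (fun v w c hv hw => by_contra fun hvw => hd hvw r c ⟨hv, hw⟩) c

theorem injective_of_pairwise_matDisjoint
    {f : Fin (n * n) → Matrix (Fin n × Fin n) (Fin n × Fin n) Bool}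
    (hS : ∀ v, IsSPermMatrix n (f v)) (hd : Pairwise (MatDisjoint on f)) : Injective f := by
  intro v w hvw
  by_contra hne
  -- the index `v` itself provides a row, so `f v` has a `true` entry
  obtain ⟨c, hc, -⟩ := (hS v).1 (finProdFinEquiv.symm v)
  exact hd hne _ c ⟨hc, hvw ▸ hc⟩

def sudokuLayer (P : Matrix (Fin n × Fin n) (Fin n × Fin n) ℕ) (v : Fin (n * n)) :
    Matrix (Fin n × Fin n) (Fin n × Fin n) Bool :=
  fun r c => decide (P r c = v + 1)

theorem pairwise_matDisjoint_sudokuLayer (P : Matrix (Fin n × Fin n) (Fin n × Fin n) ℕ) :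
    Pairwise (MatDisjoint on sudokuLayer P) := by
  intro v w hvw r c ⟨hv, hw⟩
  simp only [sudokuLayer, decide_eq_true_eq] at hv hw
  exact hvw (Fin.ext (by omega))

theorem isSudoku_iff_forall_isSPermMatrix_sudokuLayer
    (P : Matrix (Fin n × Fin n) (Fin n × Fin n) ℕ) :
    IsSudoku n P ↔ ∀ v, IsSPermMatrix n (sudokuLayer P v) := by
  simp only [IsSudoku, IsSPermMatrix, sudokuLayer, decide_eq_true_eq, forall_mem_Icc_one_iff]
  exact ⟨fun ⟨hr, hc, hb⟩ v => ⟨fun r => hr r v, fun c => hc c v, fun i j => hb i j v⟩,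
    fun h => ⟨fun r v => (h v).1 r, fun c v => (h v).2.1 c, fun i j v => (h v).2.2 i j⟩⟩


def sudokuOfLayers (f : Fin (n * n) → Matrix (Fin n × Fin n) (Fin n × Fin n) Bool)
    (hf : ∀ r c, ∃! v, f v r c = true) : Matrix (Fin n × Fin n) (Fin n × Fin n) ℕ :=
  fun r c => Fintype.choose _ (hf r c) + 1

theorem sudokuOfLayers_eq_succ_iff
    {f : Fin (n * n) → Matrix (Fin n × Fin n) (Fin n × Fin n) Bool}
    (hf : ∀ r c, ∃! v, f v r c = true) (r c : Fin n × Fin n) (v : Fin (n * n)) :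
    sudokuOfLayers f hf r c = v + 1 ↔ f v r c = true := by
  refine ⟨fun h => ?_, fun h => ?_⟩
  · have : Fintype.choose _ (hf r c) = v := Fin.ext (by simpa [sudokuOfLayers] using h)
    exact this ▸ Fintype.choose_spec _ (hf r c)
  · rw [sudokuOfLayers, (hf r c).unique (Fintype.choose_spec _ (hf r c)) h]

theorem sudokuLayer_sudokuOfLayers
    {f : Fin (n * n) → Matrix (Fin n × Fin n) (Fin n × Fin n) Bool}
    (hf : ∀ r c, ∃! v, f v r c = true) : sudokuLayer (sudokuOfLayers f hf) = f := by
  funext v r c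
  simp [sudokuLayer, sudokuOfLayers_eq_succ_iff]

theorem sudokuOfLayers_sudokuLayer {P : Matrix (Fin n × Fin n) (Fin n × Fin n) ℕ}
    (hP : ∀ r c, ∃! v, sudokuLayer P v r c = true) : sudokuOfLayers (sudokuLayer P) hP = P := by
  funext r c
  obtain ⟨v, hv, -⟩ := hP r c
  rw [(sudokuOfLayers_eq_succ_iff hP r c v).2 hv]
  simpa [sudokuLayer, eq_comm] using hv

def IsDisjointSPermFamily (F : Finset (Matrix (Fin n × Fin n) (Fin n × Fin n) Bool)) :
    Prop :=
  (∀ A ∈ F, IsSPermMatrix n A) ∧ ∀ A ∈ F, ∀ B ∈ F, A ≠ B → MatDisjoint A B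

theorem isDisjointSPermFamily_map_univ_iff {ι : Type*} [Fintype ι]
    (e : ι ↪ Matrix (Fin n × Fin n) (Fin n × Fin n) Bool) :
    IsDisjointSPermFamily (univ.map e) ↔
      (∀ v, IsSPermMatrix n (e v)) ∧ Pairwise (MatDisjoint on e) := by
  simp [IsDisjointSPermFamily, Pairwise]

noncomputable def sudokuEquivLayers :
    {P : Matrix (Fin n × Fin n) (Fin n × Fin n) ℕ // IsSudoku n P} ≃
      {e : Fin (n * n) ↪ Matrix (Fin n × Fin n) (Fin n × Fin n) Bool //
        IsDisjointSPermFamily (univ.map e)} where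
  toFun P :=
    have hS := (isSudoku_iff_forall_isSPermMatrix_sudokuLayer P.1).1 P.2
    have hd := pairwise_matDisjoint_sudokuLayer P.1
    ⟨⟨sudokuLayer P.1, injective_of_pairwise_matDisjoint hS hd⟩,
      (isDisjointSPermFamily_map_univ_iff _).2 ⟨hS, hd⟩⟩
  invFun e :=
    have he := (isDisjointSPermFamily_map_univ_iff e.1).1 e.2
    have hf := existsUnique_eq_true_of_pairwise_matDisjoint he.1 he.2
    ⟨sudokuOfLayers e.1 hf, (isSudoku_iff_forall_isSPermMatrix_sudokuLayer _).2 <| by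
      rw [sudokuLayer_sudokuOfLayers]; exact he.1⟩
  left_inv P := Subtype.ext (sudokuOfLayers_sudokuLayer _)
  right_inv e := Subtype.ext (DFunLike.coe_injective (sudokuLayer_sudokuOfLayers _))

end Layers

theorem sudoku_count_eq_factorial_mul_families_general (n : ℕ) :
    Nat.card {P : Matrix (Fin n × Fin n) (Fin n × Fin n) ℕ // IsSudoku n P} =
      (n * n).factorial *
        Nat.card {F : Finset (Matrix (Fin n × Fin n) (Fin n × Fin n) Bool) //
          F.card = n * n ∧ (∀ A ∈ F, IsSPermMatrix n A) ∧
          ∀ A ∈ F, ∀ B ∈ F, A ≠ B → MatDisjoint A B} := by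
  rw [Nat.card_congr sudokuEquivLayers]
  exact Nat.card_embedding_fin_eq_factorial_mul (n * n) IsDisjointSPermFamily

theorem sudoku_count_eq_factorial_mul_families (n : ℕ) (hn : 1 ≤ n) :
    Nat.card {P : Matrix (Fin n × Fin n) (Fin n × Fin n) ℕ // IsSudoku n P} =
      (n * n).factorial *
        Nat.card {F : Finset (Matrix (Fin n × Fin n) (Fin n × Fin n) Bool) //
          F.card = n * n ∧ (∀ A ∈ F, IsSPermMatrix n A) ∧
          ∀ A ∈ F, ∀ B ∈ F, A ≠ B → MatDisjoint A B} :=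
  sudoku_count_eq_factorial_mul_families_general n
end
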